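/- arXiv:1610.07967 — 11 statements merged into one kernel-verified Lean document; each statement's English description precedes it below -/
import Mathlib

section
/- Let λ₁, λ₂ ∈ ℚ \ {0,1}, and define g(u) = (λ₁-λ₂)(-1+u²)(1-λ₂+(-1+λ₁)u²)(-λ₂+λ₁u²). Then the point P₂ = ((-λ₂+λ₁u²)/(-1+u²), u/(-1+u²)²) satisfies the equation g(u)·y² = x(x-1)(x-λ₂) of the quadratic twist E₂^{g(u)}, for all u ∈ ℚ with u² ≠ 1. -/
theorem stmt_2 (lam1 lam2 u : ℚ) (h1 : lam1 ≠ 0) (h1' : lam1 ≠ 1)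
    (h2 : lam2 ≠ 0) (h2' : lam2 ≠ 1) (hu2 : u^2 ≠ 1) :
    let g := (lam1 - lam2)*(-1 + u^2)*(1 - lam2 + (-1 + lam1)*u^2)*(-lam2 + lam1*u^2)
    let x := (-lam2 + lam1*u^2)/(-1 + u^2)
    let y := u/(-1 + u^2)^2
    g * y^2 = x*(x-1)*(x-lam2) := by
  intro g x y
  have hne : (-1 + u^2) ≠ 0 := by
    intro h; apply hu2; linarith [h]
  simp only [g, x, y]
  field_simp
  ring
end

section
/- For α ∈ ℚ \ {0, 1, -1}, the point (X,Y) with X = (3/(4α⁴))(1+α²)²(3+12α²-22α⁴+12α⁶+3α⁸) and Y = (27/(8α⁶))(-1+α²)²(1+11α²+37α⁴+47α⁶+47α⁸+37α¹⁰+11α¹²+α¹⁴) lies on the elliptic curve C'_α: y² = x³ - 27(48α⁴+(1+α²)⁴)x - 54(1+α²)²((1+α²)⁴-144α⁴). -/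
theorem stmt_4 (α : ℚ) (h0 : α ≠ 0) (h1 : α ≠ 1) (h2 : α ≠ -1) :
    let X := (3/(4*α^4))*(1+α^2)^2*(3+12*α^2-22*α^4+12*α^6+3*α^8)
    let Y := (27/(8*α^6))*(-1+α^2)^2*(1+11*α^2+37*α^4+47*α^6+47*α^8+37*α^10+11*α^12+α^14)
    Y^2 = X^3 - 27*(48*α^4+(1+α^2)^4)*X - 54*(1+α^2)^2*((1+α^2)^4-144*α^4) := by
  intro X Y
  simp only [X, Y]
  field_simp
  ring
end

section
/- Let α ∈ ℚ \ {0, ±1} and let (t,u) ∈ ℚ² with u² = α²t⁴ - (α²+1)²t² + 4α², u ≠ 0. Define g_α(t) = (t⁴+4)(t⁴(α²-1)²+4t²(α²+1)²+4(α²-1)²)(α²t⁴-(α²+1)²t²+4α²). Then the point ((t⁴+4)(α²+1)²/(4u²), (t²-2)(α²+1)³/(8(α²-1)u⁴)) satisfies g_α(t)·y² = x(x-1)(x+(α²+1)²/(α²-1)²). -/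
/-!
Write `P = α²t⁴ - (α²+1)²t² + 4α² = u²`. Since `(α²+1)² - 4α² = (α²-1)²`, both shifted
coordinates of the point factor over the denominator `4P`: `x - 1` is the middle factor of
`g_α(t)` divided by `4P`, and `x + (α²+1)²/(α²-1)²` is the square `(α²+1)⁴(t²-2)²` divided by
`4P(α²-1)²`. Multiplying out, `x(x-1)(x+(α²+1)²/(α²-1)²)` is `g_α(t)·y²`.
-/

section

variable {K : Type*} [Field K] [CharZero K] {α t u : K}

theorem legendre_point_x_sub_one (hu : u ^ 2 = α^2*t^4 - (α^2+1)^2*t^2 + 4*α^2) (hu0 : u ≠ 0) :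
    (t^4+4)*(α^2+1)^2/(4*u^2) - 1
      = (t^4*(α^2-1)^2+4*t^2*(α^2+1)^2+4*(α^2-1)^2) / (4*u^2) := by
  field_simp
  linear_combination (-4) * hu

theorem legendre_point_x_add_shift (hα : α ^ 2 - 1 ≠ 0)
    (hu : u ^ 2 = α^2*t^4 - (α^2+1)^2*t^2 + 4*α^2) (hu0 : u ≠ 0) :
    (t^4+4)*(α^2+1)^2/(4*u^2) + (α^2+1)^2/(α^2-1)^2
      = (α^2+1)^4*(t^2-2)^2 / (4*u^2*(α^2-1)^2) := by
  field_simp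
  linear_combination 4 * (α^2+1)^2 * hu

end

theorem stmt_5_general (α t u : ℚ) (h1 : α ≠ 1) (h2 : α ≠ -1)
    (hu : u^2 = α^2*t^4 - (α^2+1)^2*t^2 + 4*α^2) (hu0 : u ≠ 0) :
    let g := (t^4+4)*(t^4*(α^2-1)^2+4*t^2*(α^2+1)^2+4*(α^2-1)^2)*(α^2*t^4-(α^2+1)^2*t^2+4*α^2)
    let x := (t^4+4)*(α^2+1)^2/(4*u^2)
    let y := (t^2-2)*(α^2+1)^3/(8*(α^2-1)*u^4)
    g * y^2 = x*(x-1)*(x+(α^2+1)^2/(α^2-1)^2) := by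
  intro g x y
  have hα : α ^ 2 - 1 ≠ 0 := sub_ne_zero.mpr (sq_ne_one_iff.mpr ⟨h1, h2⟩)
  rw [legendre_point_x_sub_one hu hu0, legendre_point_x_add_shift hα hu hu0]
  simp only [g, x, y]
  rw [← hu]
  field_simp
  ring

theorem stmt_5 (α t u : ℚ) (h0 : α ≠ 0) (h1 : α ≠ 1) (h2 : α ≠ -1)
    (hu : u^2 = α^2*t^4 - (α^2+1)^2*t^2 + 4*α^2) (hu0 : u ≠ 0) :
    let g := (t^4+4)*(t^4*(α^2-1)^2+4*t^2*(α^2+1)^2+4*(α^2-1)^2)*(α^2*t^4-(α^2+1)^2*t^2+4*α^2)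
    let x := (t^4+4)*(α^2+1)^2/(4*u^2)
    let y := (t^2-2)*(α^2+1)^3/(8*(α^2-1)*u^4)
    g * y^2 = x*(x-1)*(x+(α^2+1)^2/(α^2-1)^2) :=
  stmt_5_general α t u h1 h2 hu hu0
end

section
/- Let α ∈ ℚ \ {0, ±1} and let (t,u) ∈ ℚ² with u² = α²t⁴ - (α²+1)²t² + 4α², u ≠ 0. Define g_α(t) = (t⁴+4)(t⁴(α²-1)²+4t²(α²+1)²+4(α²-1)²)(α²t⁴-(α²+1)²t²+4α²). Then the point ((t⁴+4)(α²+1)²/(4u²), t(α²+1)³/(8αu⁴)) satisfies g_α(t)·y² = x(x-1)(x-(α²+1)²/(4α²)). -/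
/-!
Write `λ = (α²+1)²/(4α²)` and `x = (t⁴+4)(α²+1)²/(4u²)`. Using the curve equation for `u²`,
each factor of `x(x-1)(x-λ)` becomes a factor of `g_α(t)` over a power of `u`:
`x - 1 = (t⁴(α²-1)² + 4t²(α²+1)² + 4(α²-1)²)/(4u²)` and `x - λ = (α²+1)⁴t²/(4α²u²)`,
while the last factor of `g_α(t)` is `u²` itself. Both sides are then
`(t⁴+4)(t⁴(α²-1)² + 4t²(α²+1)² + 4(α²-1)²)(α²+1)⁶t²/(64α²u⁶)`.
-/

section

variable {K : Type*} [Field K] [CharZero K] {α t u : K}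

theorem pointX_sub_one (hu : u^2 = α^2*t^4 - (α^2+1)^2*t^2 + 4*α^2) (hu0 : u ≠ 0) :
    (t^4+4)*(α^2+1)^2/(4*u^2) - 1
      = (t^4*(α^2-1)^2+4*t^2*(α^2+1)^2+4*(α^2-1)^2)/(4*u^2) := by
  field_simp
  linear_combination -4 * hu

theorem pointX_sub_lambda (hu : u^2 = α^2*t^4 - (α^2+1)^2*t^2 + 4*α^2) (h0 : α ≠ 0)
    (hu0 : u ≠ 0) :
    (t^4+4)*(α^2+1)^2/(4*u^2) - (α^2+1)^2/(4*α^2) = (α^2+1)^4*t^2/(4*α^2*u^2) := by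
  field_simp
  linear_combination -(α^2+1)^2 * hu

end

theorem stmt_7_general (α t u : ℚ) (h0 : α ≠ 0)
    (hu : u^2 = α^2*t^4 - (α^2+1)^2*t^2 + 4*α^2) (hu0 : u ≠ 0) :
    let g := (t^4+4)*(t^4*(α^2-1)^2+4*t^2*(α^2+1)^2+4*(α^2-1)^2)*(α^2*t^4-(α^2+1)^2*t^2+4*α^2)
    let x := (t^4+4)*(α^2+1)^2/(4*u^2)
    let y := t*(α^2+1)^3/(8*α*u^4)
    g * y^2 = x*(x-1)*(x-(α^2+1)^2/(4*α^2)) := by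
  intro g x y
  simp only [g, x, y, pointX_sub_one hu hu0, pointX_sub_lambda hu h0 hu0, ← hu]
  field_simp
  ring

theorem stmt_7 (α t u : ℚ) (h0 : α ≠ 0) (h1 : α ≠ 1) (h2 : α ≠ -1)
    (hu : u^2 = α^2*t^4 - (α^2+1)^2*t^2 + 4*α^2) (hu0 : u ≠ 0) :
    let g := (t^4+4)*(t^4*(α^2-1)^2+4*t^2*(α^2+1)^2+4*(α^2-1)^2)*(α^2*t^4-(α^2+1)^2*t^2+4*α^2)
    let x := (t^4+4)*(α^2+1)^2/(4*u^2)
    let y := t*(α^2+1)^3/(8*α*u^4)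
    g * y^2 = x*(x-1)*(x-(α^2+1)^2/(4*α^2)) :=
  stmt_7_general α t u h0 hu hu0
end

section
/- Let α ∈ ℚ \ {0, ±1} and let (t,u) ∈ ℚ² with u² = α²t⁴ - (α²+1)²t² + 4α², u ≠ 0. Define g_α(t) = (t⁴+4)(t⁴(α²-1)²+4t²(α²+1)²+4(α²-1)²)(α²t⁴-(α²+1)²t²+4α²). Then the point ((t⁴+4)/(t²+2)², t/((t²+2)³αu)) satisfies g_α(t)·y² = x(x-1)(x-(α²+1)²/(4α²)). -/
theorem stmt_8 (α t u : ℚ) (h0 : α ≠ 0) (h1 : α ≠ 1) (h2 : α ≠ -1)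
    (hu : u^2 = α^2*t^4 - (α^2+1)^2*t^2 + 4*α^2) (hu0 : u ≠ 0) :
    let g := (t^4+4)*(t^4*(α^2-1)^2+4*t^2*(α^2+1)^2+4*(α^2-1)^2)*(α^2*t^4-(α^2+1)^2*t^2+4*α^2)
    let x := (t^4+4)/(t^2+2)^2
    let y := t/((t^2+2)^3*α*u)
    g * y^2 = x*(x-1)*(x-(α^2+1)^2/(4*α^2)) := by
  intro g x y
  have ht : t^2+2 ≠ 0 := by positivity
  show (t^4+4)*(t^4*(α^2-1)^2+4*t^2*(α^2+1)^2+4*(α^2-1)^2)*(α^2*t^4-(α^2+1)^2*t^2+4*α^2)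
      * (t/((t^2+2)^3*α*u))^2 = x*(x-1)*(x-(α^2+1)^2/(4*α^2))
  rw [← hu]
  show _ = (t^4+4)/(t^2+2)^2 * ((t^4+4)/(t^2+2)^2-1) * ((t^4+4)/(t^2+2)^2-(α^2+1)^2/(4*α^2))
  field_simp
  ring
end

section
/- Let α ∈ ℚ \ {0, ±1} and (t,u) ∈ ℚ² with u² = α²t⁴-(α²+1)²t²+4α², u ≠ 0. Define g_α(t) = -(t⁴+4)((α²-1)²t⁴+4(α²+1)²t²+4(α²-1)²)(α²t⁴-(α²+1)²t²+4α²). Then the point (-(t⁴(α²-1)²+4t²(α²+1)²+4(α²-1)²)/(4u²), (t²-2)(α²+1)³/(8(α²-1)u⁴)) satisfies g_α(t)·y² = x(x-1)(x - 2(1+α⁴)/(α²-1)²). -/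
/-!
The point depends on `u` only through `u² = α²t⁴ - (α²+1)²t² + 4α²`, so the claim is an identity
of rational functions in `α` and `t`; clearing the denominators `u²` and `α² - 1` turns it into a
polynomial identity.
-/

theorem legendre_twist_identity {K : Type*} [Field K] [CharZero K] (α t s : K)
    (hα : α^2 - 1 ≠ 0) (hs : s = α^2*t^4 - (α^2+1)^2*t^2 + 4*α^2) (hs0 : s ≠ 0) :
    let x := -(t^4*(α^2-1)^2+4*t^2*(α^2+1)^2+4*(α^2-1)^2)/(4*s)
    let y := (t^2-2)*(α^2+1)^3/(8*(α^2-1)*s^2)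
    let g := -(t^4+4)*((α^2-1)^2*t^4+4*(α^2+1)^2*t^2+4*(α^2-1)^2)*s
    g * y^2 = x*(x-1)*(x - 2*(1+α^4)/(α^2-1)^2) := by
  intro x y g
  simp only [x, y, g]
  field_simp
  subst hs
  ring

theorem stmt_9_general (α t u : ℚ) (h1 : α ≠ 1) (h2 : α ≠ -1)
    (hu : u^2 = α^2*t^4 - (α^2+1)^2*t^2 + 4*α^2) (hu0 : u ≠ 0) :
    let g := -(t^4+4)*((α^2-1)^2*t^4+4*(α^2+1)^2*t^2+4*(α^2-1)^2)*(α^2*t^4-(α^2+1)^2*t^2+4*α^2)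
    let x := -(t^4*(α^2-1)^2+4*t^2*(α^2+1)^2+4*(α^2-1)^2)/(4*u^2)
    let y := (t^2-2)*(α^2+1)^3/(8*(α^2-1)*u^4)
    g * y^2 = x*(x-1)*(x - 2*(1+α^4)/(α^2-1)^2) := by
  have hα : α^2 - 1 ≠ 0 := sub_ne_zero.2 fun h => (sq_eq_one_iff.1 h).elim h1 h2
  rw [← hu, show u^4 = (u^2)^2 by ring]
  exact legendre_twist_identity α t (u^2) hα hu (pow_ne_zero 2 hu0)

theorem stmt_9 (α t u : ℚ) (h0 : α ≠ 0) (h1 : α ≠ 1) (h2 : α ≠ -1)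
    (hu : u^2 = α^2*t^4 - (α^2+1)^2*t^2 + 4*α^2) (hu0 : u ≠ 0) :
    let g := -(t^4+4)*((α^2-1)^2*t^4+4*(α^2+1)^2*t^2+4*(α^2-1)^2)*(α^2*t^4-(α^2+1)^2*t^2+4*α^2)
    let x := -(t^4*(α^2-1)^2+4*t^2*(α^2+1)^2+4*(α^2-1)^2)/(4*u^2)
    let y := (t^2-2)*(α^2+1)^3/(8*(α^2-1)*u^4)
    g * y^2 = x*(x-1)*(x - 2*(1+α^4)/(α^2-1)^2) :=
  stmt_9_general α t u h1 h2 hu hu0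
end

section
/- Let α ∈ ℚ \ {0, ±1} and (t,u) ∈ ℚ² with u² = α²t⁴-(α²+1)²t²+4α², u ≠ 0, t ≠ 0. Define g_α(t) = -(t⁴+4)((α²-1)²t⁴+4(α²+1)²t²+4(α²-1)²)(α²t⁴-(α²+1)²t²+4α²). Then the point (-(t²-2)²/(4t²), (t²-2)/(8t³(α²-1)u)) satisfies g_α(t)·y² = x(x-1)(x - 2(1+α⁴)/(α²-1)²). -/
/-!
Writing `x = -(t² - 2)² / (4t²)`, the three factors `x`, `x - 1` and `x - 2(1 + α⁴)/(α² - 1)²`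
have numerators `(t² - 2)²`, `t⁴ + 4` and `(α² - 1)²t⁴ + 4(α² + 1)²t² + 4(α² - 1)²`.
The last two, up to sign, are the first two factors of `g`, while the third factor of `g` is `u²`,
which cancels the `u²` in the denominator of `y²`.
-/

section LegendreTwist

variable {K : Type*} [Field K]

lemma neg_sq_sub_two_div_sub_one [CharZero K] {t : K} (ht : t ≠ 0) :
    -(t^2-2)^2/(4*t^2) - 1 = -(t^4+4)/(4*t^2) := by
  field_simp
  ring

lemma neg_sq_sub_two_div_sub_legendre_root [CharZero K] {α t : K} (ht : t ≠ 0) (hα : α^2 - 1 ≠ 0) :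
    -(t^2-2)^2/(4*t^2) - 2*(1+α^4)/(α^2-1)^2 =
      -((α^2-1)^2*t^4+4*(α^2+1)^2*t^2+4*(α^2-1)^2)/(4*t^2*(α^2-1)^2) := by
  field_simp
  ring

lemma legendre_rhs_at_neg_sq_sub_two_div [CharZero K] {α t : K} (ht : t ≠ 0) (hα : α^2 - 1 ≠ 0) :
    let x := -(t^2-2)^2/(4*t^2)
    x*(x-1)*(x - 2*(1+α^4)/(α^2-1)^2) =
      -(t^2-2)^2*(t^4+4)*((α^2-1)^2*t^4+4*(α^2+1)^2*t^2+4*(α^2-1)^2)/(64*t^6*(α^2-1)^2) := by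
  dsimp only
  rw [neg_sq_sub_two_div_sub_one ht, neg_sq_sub_two_div_sub_legendre_root ht hα]
  field_simp
  ring

lemma twist_mul_sq_eq {α t u : K} (hu : u^2 = α^2*t^4 - (α^2+1)^2*t^2 + 4*α^2) (hu0 : u ≠ 0)
    (ht : t ≠ 0) (hα : α^2 - 1 ≠ 0) :
    -(t^4+4)*((α^2-1)^2*t^4+4*(α^2+1)^2*t^2+4*(α^2-1)^2)*(α^2*t^4-(α^2+1)^2*t^2+4*α^2) *
        ((t^2-2)/(8*t^3*(α^2-1)*u))^2 =
      -(t^2-2)^2*(t^4+4)*((α^2-1)^2*t^4+4*(α^2+1)^2*t^2+4*(α^2-1)^2)/(64*t^6*(α^2-1)^2) := by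
  rw [← hu]
  field_simp
  ring

end LegendreTwist

theorem stmt_10_general (α t u : ℚ) (h1 : α ≠ 1) (h2 : α ≠ -1)
    (hu : u^2 = α^2*t^4 - (α^2+1)^2*t^2 + 4*α^2) (hu0 : u ≠ 0) (ht : t ≠ 0) :
    let g := -(t^4+4)*((α^2-1)^2*t^4+4*(α^2+1)^2*t^2+4*(α^2-1)^2)*(α^2*t^4-(α^2+1)^2*t^2+4*α^2)
    let x := -(t^2-2)^2/(4*t^2)
    let y := (t^2-2)/(8*t^3*(α^2-1)*u)
    g * y^2 = x*(x-1)*(x - 2*(1+α^4)/(α^2-1)^2) := by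
  have hα : α^2 - 1 ≠ 0 := by
    rw [sub_ne_zero, Ne, sq_eq_one_iff]
    exact not_or.mpr ⟨h1, h2⟩
  exact (twist_mul_sq_eq hu hu0 ht hα).trans (legendre_rhs_at_neg_sq_sub_two_div ht hα).symm

theorem stmt_10 (α t u : ℚ) (h0 : α ≠ 0) (h1 : α ≠ 1) (h2 : α ≠ -1)
    (hu : u^2 = α^2*t^4 - (α^2+1)^2*t^2 + 4*α^2) (hu0 : u ≠ 0) (ht : t ≠ 0) :
    let g := -(t^4+4)*((α^2-1)^2*t^4+4*(α^2+1)^2*t^2+4*(α^2-1)^2)*(α^2*t^4-(α^2+1)^2*t^2+4*α^2)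
    let x := -(t^2-2)^2/(4*t^2)
    let y := (t^2-2)/(8*t^3*(α^2-1)*u)
    g * y^2 = x*(x-1)*(x - 2*(1+α^4)/(α^2-1)^2) :=
  stmt_10_general α t u h1 h2 hu hu0 ht
end

section
/- Let α ∈ ℚ \ {0, ±1} and (t,u) ∈ ℚ² with u² = α²t⁴-(α²+1)²t²+4α², u ≠ 0. Define g_α(t) = -(t⁴+4)((α²-1)²t⁴+4(α²+1)²t²+4(α²-1)²)(α²t⁴-(α²+1)²t²+4α²). Then the point (-(t⁴(α²-1)²+4t²(α²+1)²+4(α²-1)²)/(4u²), t(α²+1)³/(8αu⁴)) satisfies g_α(t)·y² = x(x-1)(x + (α²-1)²/(4α²)). -/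
/-! Put P = α²t⁴ - (α²+1)²t² + 4α² = u² and Q = (α²-1)²t⁴ + 4(α²+1)²t² + 4(α²-1)², so that
x = -Q/(4P). The identities Q + 4P = (α²+1)²(t⁴+4) and (α²-1)²P - α²Q = -(α²+1)⁴t² factor the
other two terms of the cubic: x - 1 = -(α²+1)²(t⁴+4)/(4P) and
x + (α²-1)²/(4α²) = -(α²+1)⁴t²/(4α²P). The right side is therefore
-(α²+1)⁶t²(t⁴+4)Q/(64α²P³), which is g·y² because g = -(t⁴+4)QP and y² = (α²+1)⁶t²/(64α²P⁴). -/

section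
variable {K : Type*} [Field K] [NeZero (4 : K)] (α t : K)

theorem twist_x_sub_one_eq (hP : α^2*t^4 - (α^2+1)^2*t^2 + 4*α^2 ≠ 0) :
    -(t^4*(α^2-1)^2+4*t^2*(α^2+1)^2+4*(α^2-1)^2)/(4*(α^2*t^4 - (α^2+1)^2*t^2 + 4*α^2)) - 1 =
      -((α^2+1)^2*(t^4+4))/(4*(α^2*t^4 - (α^2+1)^2*t^2 + 4*α^2)) := by
  rw [div_sub_one (mul_ne_zero four_ne_zero hP)]
  ring

theorem twist_x_add_eq (hα : α ≠ 0) (hP : α^2*t^4 - (α^2+1)^2*t^2 + 4*α^2 ≠ 0) :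
    -(t^4*(α^2-1)^2+4*t^2*(α^2+1)^2+4*(α^2-1)^2)/(4*(α^2*t^4 - (α^2+1)^2*t^2 + 4*α^2)) +
        (α^2-1)^2/(4*α^2) =
      -(t^2*(α^2+1)^4)/(4*α^2*(α^2*t^4 - (α^2+1)^2*t^2 + 4*α^2)) := by
  have h4P : 4*(α^2*t^4 - (α^2+1)^2*t^2 + 4*α^2) ≠ 0 := mul_ne_zero four_ne_zero hP
  have h4α : 4*α^2 ≠ 0 := mul_ne_zero four_ne_zero (pow_ne_zero 2 hα)
  rw [div_add_div _ _ h4P h4α, div_eq_div_iff (mul_ne_zero h4P h4α) (mul_ne_zero h4α hP)]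
  ring

end

theorem stmt_11_general (α t u : ℚ) (h0 : α ≠ 0)
    (hu : u^2 = α^2*t^4 - (α^2+1)^2*t^2 + 4*α^2) (hu0 : u ≠ 0) :
    let g := -(t^4+4)*((α^2-1)^2*t^4+4*(α^2+1)^2*t^2+4*(α^2-1)^2)*(α^2*t^4-(α^2+1)^2*t^2+4*α^2)
    let x := -(t^4*(α^2-1)^2+4*t^2*(α^2+1)^2+4*(α^2-1)^2)/(4*u^2)
    let y := t*(α^2+1)^3/(8*α*u^4)
    g * y^2 = x*(x-1)*(x + (α^2-1)^2/(4*α^2)) := by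
  intro g x y
  have hP : α^2*t^4 - (α^2+1)^2*t^2 + 4*α^2 ≠ 0 := hu ▸ pow_ne_zero 2 hu0
  have hu4 : u^4 = (α^2*t^4 - (α^2+1)^2*t^2 + 4*α^2)^2 := by rw [← hu]; ring
  simp only [x, hu, twist_x_sub_one_eq α t hP, twist_x_add_eq α t h0 hP]
  simp only [g, y, hu4]
  field_simp
  ring

theorem stmt_11 (α t u : ℚ) (h0 : α ≠ 0) (h1 : α ≠ 1) (h2 : α ≠ -1)
    (hu : u^2 = α^2*t^4 - (α^2+1)^2*t^2 + 4*α^2) (hu0 : u ≠ 0) :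
    let g := -(t^4+4)*((α^2-1)^2*t^4+4*(α^2+1)^2*t^2+4*(α^2-1)^2)*(α^2*t^4-(α^2+1)^2*t^2+4*α^2)
    let x := -(t^4*(α^2-1)^2+4*t^2*(α^2+1)^2+4*(α^2-1)^2)/(4*u^2)
    let y := t*(α^2+1)^3/(8*α*u^4)
    g * y^2 = x*(x-1)*(x + (α^2-1)^2/(4*α^2)) :=
  stmt_11_general α t u h0 hu hu0
end

section
/- Let α ∈ ℚ \ {0, ±1} and (t,u) ∈ ℚ² with u² = α²t⁴-(α²+1)²t²+4α², u ≠ 0. Define g_α(t) = -(t⁴+4)((α²-1)²t⁴+4(α²+1)²t²+4(α²-1)²)(α²t⁴-(α²+1)²t²+4α²). Then the point (4t²/(t²+2)², t/((t²+2)³αu)) satisfies g_α(t)·y² = x(x-1)(x + (α²-1)²/(4α²)). -/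
theorem stmt_12 (α t u : ℚ) (h0 : α ≠ 0) (h1 : α ≠ 1) (h2 : α ≠ -1)
    (hu : u^2 = α^2*t^4 - (α^2+1)^2*t^2 + 4*α^2) (hu0 : u ≠ 0) :
    let g := -(t^4+4)*((α^2-1)^2*t^4+4*(α^2+1)^2*t^2+4*(α^2-1)^2)*(α^2*t^4-(α^2+1)^2*t^2+4*α^2)
    let x := 4*t^2/(t^2+2)^2
    let y := t/((t^2+2)^3*α*u)
    g * y^2 = x*(x-1)*(x + (α^2-1)^2/(4*α^2)) := by
  intro g x y
  have ht : t^2+2 ≠ 0 := by positivity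
  simp only [g, x, y]
  rw [← hu]
  field_simp
  ring
end

section
/- Let f(x) = x(x-1)(x-λ) with λ ∈ ℚ \ {0,1}, and let h(t) = (αt+β)/(t+δ) be a linear fractional transformation (α, β, δ ∈ ℚ, αδ - β ≠ 0) that permutes the set {0, 1, λ} of roots of f. Then f(h(t))·(t+δ)⁴ = f(α)·(t+δ)·f(t) as polynomials in t. -/
theorem stmt_18 (lam α β δ : ℚ) (h0 : lam ≠ 0) (h1 : lam ≠ 1)
    (hdet : α*δ - β ≠ 0)
    (f : ℚ → ℚ) (hf : ∀ x, f x = x*(x-1)*(x-lam))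
    (h : ℚ → ℚ) (hh : ∀ t, h t = (α*t + β)/(t + δ))
    (hp0 : (0:ℚ) + δ ≠ 0) (hp1 : (1:ℚ) + δ ≠ 0) (hpl : lam + δ ≠ 0)
    (hperm : Set.BijOn h ({0, 1, lam} : Set ℚ) ({0, 1, lam} : Set ℚ)) :
    ∀ t : ℚ, f (h t) * (t + δ)^4 = f α * (t + δ) * f t := by
  -- For each s in {0,1,lam}, h s is in {0,1,lam}, giving P(s) = 0
  have E : ∀ s : ℚ, s + δ ≠ 0 → h s ∈ ({0, 1, lam} : Set ℚ) →
      (α*s+β)*((α*s+β)-(s+δ))*((α*s+β)-lam*(s+δ)) = 0 := by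
    intro s hs hm
    rw [hh s] at hm
    simp only [Set.mem_insert_iff, Set.mem_singleton_iff] at hm
    rcases hm with hr | hr | hr <;> rw [div_eq_iff hs] at hr
    · rw [show α*s+β = 0*(s+δ) from hr]; ring
    · rw [show α*s+β = 1*(s+δ) from hr]; ring
    · rw [show α*s+β = lam*(s+δ) from hr]; ring
  have e0 := E 0 hp0 (hperm.mapsTo (by simp))
  have e1 := E 1 hp1 (hperm.mapsTo (by simp))
  have el := E lam hpl (hperm.mapsTo (by simp))
  intro t
  by_cases ht : t + δ = 0
  · rw [hh t, ht, div_zero]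
    simp [hf]
  · have hll : lam * (lam - 1) ≠ 0 := mul_ne_zero h0 (sub_ne_zero.mpr h1)
    have key : lam * (lam - 1) *
        ((α*t+β)*((α*t+β)-(t+δ))*((α*t+β)-lam*(t+δ))
          - (α*(α-1)*(α-lam))*(t*(t-1)*(t-lam))) = 0 := by
      linear_combination ((lam-1)*t^2 - (lam^2-1)*t + lam*(lam-1)) * e0
        + (-lam*t^2 + lam^2*t) * e1 + (t^2 - t) * el
    have hP : (α*t+β)*((α*t+β)-(t+δ))*((α*t+β)-lam*(t+δ))
        = (α*(α-1)*(α-lam))*(t*(t-1)*(t-lam)) := by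
      rcases mul_eq_zero.mp key with h' | h'
      · exact absurd h' hll
      · linarith [sub_eq_zero.mp h']
    have hft : f (h t) * (t+δ)^4
        = (α*t+β)*((α*t+β)-(t+δ))*((α*t+β)-lam*(t+δ)) * (t+δ) := by
      rw [hf, hh]
      field_simp
    rw [hft, hf, hf, hP]
    ring
end

section
/- Let α ∈ ℚ \ {0,±1}, and let (t,u) ∈ ℚ² with u² = α²t⁴-(α²+1)²t²+4α², u ≠ 0 and t(t²-2) ≠ 0. Set λ₁ = -(α²+1)²/(α²-1)², λ₂ = (α²+1)²/(4α²), T = (α²-1)t/(α(t²-2)), z = (-λ₂+λ₁T²)/(-1+T²), k₁(z) = λ₁((1+λ₁)z-λ₁) and k₂(z) = λ₂((1+λ₂)z-λ₂). Then k₁(z) = ((α²+1)³t/((α²-1)²u))² and k₂(z) = ((α²+1)³(t²+2)/(8α²u))². -/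
/-! The substitution `T = (α²-1)t/(α(t²-2))` turns the relation `u² = α²t⁴-(α²+1)²t²+4α²` into
`1 - T² = u²/(α(t²-2))²`, after which `z = (α²+1)²(t⁴+4)/(4u²)` and both `kᵢ(z)` collapse to
squares by clearing denominators. -/

section

variable {K : Type*} [Field K] {α t u : K}

def lam₁ (α : K) : K := -(α^2+1)^2/(α^2-1)^2

def lam₂ (α : K) : K := (α^2+1)^2/(4*α^2)

def paramT (α t : K) : K := (α^2-1)*t/(α*(t^2-2))

lemma neg_one_add_paramT_sq (hα : α ≠ 0) (ht : t^2 - 2 ≠ 0)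
    (hu : u^2 = α^2*t^4 - (α^2+1)^2*t^2 + 4*α^2) :
    -1 + paramT α t ^ 2 = -u^2/(α*(t^2-2))^2 := by
  unfold paramT
  field_simp
  linear_combination hu

lemma ne_zero_of_paramT_sq_ne_one (hα : α ≠ 0) (ht : t^2 - 2 ≠ 0)
    (hu : u^2 = α^2*t^4 - (α^2+1)^2*t^2 + 4*α^2) (hT : paramT α t ^ 2 ≠ 1) : u ≠ 0 := by
  rintro rfl
  apply hT
  linear_combination neg_one_add_paramT_sq hα ht hu

lemma div_paramT_eq [CharZero K] (hα : α ≠ 0) (hα₁ : α^2 - 1 ≠ 0) (ht : t^2 - 2 ≠ 0) (hu₀ : u ≠ 0)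
    (hu : u^2 = α^2*t^4 - (α^2+1)^2*t^2 + 4*α^2) :
    (-lam₂ α + lam₁ α * paramT α t ^ 2)/(-1 + paramT α t ^ 2) =
      (α^2+1)^2*(t^4+4)/(4*u^2) := by
  rw [neg_one_add_paramT_sq hα ht hu]
  unfold lam₁ lam₂ paramT
  field_simp
  ring

lemma lam₁_mul_eq_sq [CharZero K] (hα₁ : α^2 - 1 ≠ 0) (hu₀ : u ≠ 0)
    (hu : u^2 = α^2*t^4 - (α^2+1)^2*t^2 + 4*α^2) :
    lam₁ α * ((1 + lam₁ α)*((α^2+1)^2*(t^4+4)/(4*u^2)) - lam₁ α) =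
      ((α^2+1)^3*t/((α^2-1)^2*u))^2 := by
  unfold lam₁
  field_simp
  linear_combination (-4*(α^2+1)^4) * hu

lemma lam₂_mul_eq_sq [CharZero K] (hα : α ≠ 0) (hu₀ : u ≠ 0)
    (hu : u^2 = α^2*t^4 - (α^2+1)^2*t^2 + 4*α^2) :
    lam₂ α * ((1 + lam₂ α)*((α^2+1)^2*(t^4+4)/(4*u^2)) - lam₂ α) =
      ((α^2+1)^3*(t^2+2)/(8*α^2*u))^2 := by
  unfold lam₂
  field_simp
  linear_combination (-256*(α^2+1)^4) * hu

end

/-- At `t² = 2` the quartic equals `-2(α²-1)²`, which is not a square. -/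
lemma sq_sub_two_ne_zero {K : Type*} [Field K] [LinearOrder K] [IsStrictOrderedRing K]
    {α t u : K} (hα₁ : α^2 - 1 ≠ 0) (hu : u^2 = α^2*t^4 - (α^2+1)^2*t^2 + 4*α^2) :
    t^2 - 2 ≠ 0 := by
  intro ht
  have hneg : u^2 + 2*(α^2-1)^2 = 0 := by linear_combination hu + (α^2*t^2 - α^4 - 1) * ht
  have : 0 < u^2 + 2*(α^2-1)^2 := by positivity
  exact this.ne' hneg

theorem stmt_19_general (α t u : ℚ) (h0 : α ≠ 0) (h1 : α ≠ 1) (h2 : α ≠ -1)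
    (hu : u^2 = α^2*t^4 - (α^2+1)^2*t^2 + 4*α^2) :
    let lam1 := -(α^2+1)^2/(α^2-1)^2
    let lam2 := (α^2+1)^2/(4*α^2)
    let T := (α^2-1)*t/(α*(t^2-2))
    T^2 ≠ 1 →
    let z := (-lam2 + lam1*T^2)/(-1 + T^2)
    lam1*((1+lam1)*z - lam1) = ((α^2+1)^3*t/((α^2-1)^2*u))^2 ∧
    lam2*((1+lam2)*z - lam2) = ((α^2+1)^3*(t^2+2)/(8*α^2*u))^2 := by
  intro lam1 lam2 T hT z
  have hα₁ : α^2 - 1 ≠ 0 := sub_ne_zero.mpr (by simp [sq_eq_one_iff, h1, h2])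
  have ht : t^2 - 2 ≠ 0 := sq_sub_two_ne_zero hα₁ hu
  have hu₀ : u ≠ 0 := ne_zero_of_paramT_sq_ne_one h0 ht hu hT
  have hz : z = (α^2+1)^2*(t^4+4)/(4*u^2) := div_paramT_eq h0 hα₁ ht hu₀ hu
  rw [hz]
  exact ⟨lam₁_mul_eq_sq hα₁ hu₀ hu, lam₂_mul_eq_sq h0 hu₀ hu⟩

theorem stmt_19 (α t u : ℚ) (h0 : α ≠ 0) (h1 : α ≠ 1) (h2 : α ≠ -1)
    (hu : u^2 = α^2*t^4 - (α^2+1)^2*t^2 + 4*α^2) (hu0 : u ≠ 0) (ht : t*(t^2-2) ≠ 0) :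
    let lam1 := -(α^2+1)^2/(α^2-1)^2
    let lam2 := (α^2+1)^2/(4*α^2)
    let T := (α^2-1)*t/(α*(t^2-2))
    T^2 ≠ 1 →
    let z := (-lam2 + lam1*T^2)/(-1 + T^2)
    lam1*((1+lam1)*z - lam1) = ((α^2+1)^3*t/((α^2-1)^2*u))^2 ∧
    lam2*((1+lam2)*z - lam2) = ((α^2+1)^3*(t^2+2)/(8*α^2*u))^2 :=
  stmt_19_general α t u h0 h1 h2 hu
end
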